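/- arXiv:math/0608019 — 6 statements merged into one kernel-verified Lean document; each statement's English description precedes it below -/
import Mathlib

section
/- Let A be a reduced commutative ring, a ⊆ A a radical ideal, and Y a locally closed subset of Spec(A) whose closure equals V(a). Then for every nonzero polynomial P ∈ (A/a)[x₁,...,xₙ], there exists a prime p ∈ Y such that the leading coefficient of P does not lie in p. -/
open MvPolynomial

/-- Let `A` be a (noetherian) reduced commutative ring, `a ⊆ A` a radical ideal, and `Y` a
locally closed subset of `Spec A` whose closure equals `V(a)`.  Then for every nonzero
polynomial `P ∈ (A/a)[x₁,…,xₙ]`, there exists a prime `p ∈ Y` such that the leading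
coefficient of `P` (its coefficient at the maximal element of its support with respect to a
fixed monomial order) does not lie in `p` (i.e. in the image of `p` in `A/a`). -/
theorem exists_prime_leadingCoeff_not_mem
    {n : ℕ} {A : Type*} [CommRing A] [IsNoetherianRing A] [IsReduced A]
    [LinearOrder (Fin n →₀ ℕ)]
    (a : Ideal A) (ha : a.IsRadical)
    (Y : Set (PrimeSpectrum A)) (hY : IsLocallyClosed Y)
    (hcl : closure Y = PrimeSpectrum.zeroLocus (a : Set A))
    (P : MvPolynomial (Fin n) (A ⧸ a)) (hP : P ≠ 0) :
    ∃ p ∈ Y,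
      P.coeff (P.support.max' (Finset.nonempty_iff_ne_empty.mpr
        (fun h => hP (MvPolynomial.support_eq_empty.mp h)))) ∉
        (PrimeSpectrum.asIdeal p).map (Ideal.Quotient.mk a) := by
  set m := P.support.max' (Finset.nonempty_iff_ne_empty.mpr
        (fun h => hP (MvPolynomial.support_eq_empty.mp h))) with hm
  have hc : P.coeff m ≠ 0 := by
    rw [← MvPolynomial.mem_support_iff]
    exact P.support.max'_mem _
  obtain ⟨c, hcmk⟩ := Ideal.Quotient.mk_surjective (P.coeff m)
  by_contra h
  push_neg at h
  have hsub : Y ⊆ PrimeSpectrum.zeroLocus {c} := by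
    intro p hp
    have hap : a ≤ p.asIdeal := by
      have : p ∈ closure Y := subset_closure hp
      rw [hcl] at this
      exact this
    have := h p hp
    rw [← hcmk, Ideal.mem_quotient_iff_mem hap] at this
    simpa [PrimeSpectrum.mem_zeroLocus] using this
  have hVa : PrimeSpectrum.zeroLocus (a : Set A) ⊆ PrimeSpectrum.zeroLocus {c} := by
    rw [← hcl]
    exact closure_minimal hsub (PrimeSpectrum.isClosed_zeroLocus _)
  have hca : c ∈ a := by
    have : c ∈ a.radical := by
      rw [Ideal.radical_eq_sInf, Submodule.mem_sInf]
      simp only [Set.mem_setOf_eq, and_imp]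
      intro J hJ1 hJ2
      have : ⟨J, hJ2⟩ ∈ PrimeSpectrum.zeroLocus (a : Set A) :=
        fun x hx => hJ1 hx
      simpa using hVa this
    exact ha this
  apply hc
  rw [← hcmk]
  exact (Ideal.Quotient.eq_zero_iff_mem).mpr hca
end

section
/- Let Y and Y' be distinct, locally closed, irreducible subsets of Spec(A) for a noetherian commutative ring A. Then the generic point of Y is contained in Y' if and only if Y ⊆ closure(Y') and Y ∩ Y' ≠ ∅. -/
/-- Let `Y` and `Y'` be distinct, locally closed, irreducible subsets of `Spec A`, `A` a
noetherian commutative ring, and let `η` be the generic point of `Y` (i.e. `η ∈ Y` and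
`closure {η} = closure Y`).  Then `η ∈ Y'` if and only if `Y ⊆ closure Y'` and
`Y ∩ Y' ≠ ∅`. -/
theorem generic_mem_iff_subset_closure_and_inter_nonempty
    {A : Type*} [CommRing A] [IsNoetherianRing A]
    (Y Y' : Set (PrimeSpectrum A)) (hne : Y ≠ Y')
    (hY : IsLocallyClosed Y) (hYirr : IsIrreducible Y)
    (hY' : IsLocallyClosed Y') (hY'irr : IsIrreducible Y')
    (η : PrimeSpectrum A) (hη : η ∈ Y) (hgen : closure {η} = closure Y) :
    η ∈ Y' ↔ Y ⊆ closure Y' ∧ (Y ∩ Y').Nonempty := by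
  constructor
  · intro hη'
    refine ⟨?_, η, hη, hη'⟩
    calc Y ⊆ closure Y := subset_closure
    _ = closure {η} := hgen.symm
    _ ⊆ closure Y' := closure_mono (Set.singleton_subset_iff.2 hη')
  · rintro ⟨hsub, x, hxY, hxY'⟩
    obtain ⟨U, Z, hU, hZ, hYZ⟩ := hY'
    have hx : x ∈ closure {η} := hgen ▸ subset_closure hxY
    have hxU : x ∈ U := (hYZ ▸ hxY').1
    have hηU : η ∈ U := by
      have := mem_closure_iff.1 hx U hU hxU
      simpa using this
    have hηcl : η ∈ closure Y' := hsub hη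
    have hηZ : η ∈ Z := hZ.closure_subset (closure_mono (hYZ ▸ Set.inter_subset_right) hηcl)
    exact hYZ ▸ ⟨hηU, hηZ⟩
end

section
/- Let A be a commutative ring, B ∈ A^{n×n} a square matrix whose determinant det(B) is not a zero divisor, c ∈ Aⁿ, and I ⊆ A[x₁,...,xₙ] the ideal generated by the n linear polynomials P_i = Σ_j b_{ij}x_j − c_i. Then 1 ∉ lt(I), i.e., I contains no nonzero constant; equivalently, I is a proper ideal containing no nonzero element of A. -/
open MvPolynomial Matrix

/-- `t` is the leading term of `P` with respect to the fixed order on monomials. -/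
def IsLeadingTermOf {n : ℕ} [LinearOrder (Fin n →₀ ℕ)] {A : Type*} [CommRing A]
    (P : MvPolynomial (Fin n) A) (t : Fin n →₀ ℕ) : Prop :=
  P.coeff t ≠ 0 ∧ ∀ t', P.coeff t' ≠ 0 → t' ≤ t

/-- The set `lt(I)` of leading terms of nonzero elements of `I`. -/
def ltSet {n : ℕ} [LinearOrder (Fin n →₀ ℕ)] {A : Type*} [CommRing A]
    (I : Ideal (MvPolynomial (Fin n) A)) : Set (Fin n →₀ ℕ) :=
  {t | ∃ P ∈ I, IsLeadingTermOf P t}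

/-- The ideal `lc(I,t)` of leading coefficients at `t`. -/
def lcIdeal {n : ℕ} [LinearOrder (Fin n →₀ ℕ)] {A : Type*} [CommRing A]
    (I : Ideal (MvPolynomial (Fin n) A)) (t : Fin n →₀ ℕ) : Ideal A :=
  Ideal.span {a | ∃ P ∈ I, IsLeadingTermOf P t ∧ P.coeff t = a}

/-- Let `A` be a commutative ring, `B` an `n×n` matrix whose determinant is not a zero
divisor, `c ∈ Aⁿ`, and `I ⊆ A[x₁,…,xₙ]` the ideal generated by the linear polynomials
`P_i = ∑_j b_{ij}x_j − c_i`.  Then `1 ∉ lt(I)` (the constant monomial is not a leading term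
of `I`), i.e. `I` contains no nonzero constant. -/
theorem one_not_mem_ltSet_of_linear_system
    {n : ℕ} {A : Type*} [CommRing A] [LinearOrder (Fin n →₀ ℕ)]
    (hadd : ∀ u v w : Fin n →₀ ℕ, u ≤ v → u + w ≤ v + w)
    (hzero : ∀ u : Fin n →₀ ℕ, 0 ≤ u)
    (hwf : WellFounded ((· < ·) : (Fin n →₀ ℕ) → (Fin n →₀ ℕ) → Prop))
    (B : Matrix (Fin n) (Fin n) A) (hB : B.det ∈ nonZeroDivisors A)
    (c : Fin n → A)
    (I : Ideal (MvPolynomial (Fin n) A))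
    (hI : I = Ideal.span (Set.range fun i : Fin n =>
      (∑ j : Fin n, MvPolynomial.C (B i j) * MvPolynomial.X j) - MvPolynomial.C (c i))) :
    (0 : Fin n →₀ ℕ) ∉ ltSet I ∧ ∀ a : A, MvPolynomial.C a ∈ I → a = 0 := by

  have main : ∀ a : A, MvPolynomial.C a ∈ I → a = 0 := by
    intro a ha
    set S := Submonoid.powers B.det with hSdef
    have hS : S ≤ nonZeroDivisors A := by
      rintro x ⟨k, rfl⟩
      exact pow_mem hB k
    set K := Localization S with hK
    set f := algebraMap A K with hf
    have hdet : IsUnit (B.map f).det := by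
      have h1 : (B.map f).det = f B.det := (RingHom.map_det f B).symm
      rw [h1]
      exact IsLocalization.map_units K ⟨B.det, Submonoid.mem_powers _⟩
    set ξ : Fin n → K := (B.map f)⁻¹ *ᵥ (f ∘ c) with hxi
    have hmv : (B.map f) *ᵥ ξ = f ∘ c := by
      rw [hxi, Matrix.mulVec_mulVec, Matrix.mul_nonsing_inv _ hdet, Matrix.one_mulVec]
    set φ := MvPolynomial.aeval (R := A) ξ with hφ
    have hker : I ≤ RingHom.ker φ := by
      rw [hI, Ideal.span_le]
      rintro _ ⟨i, rfl⟩
      have hi := congrFun hmv i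
      simp only [Matrix.mulVec, dotProduct, Matrix.map_apply, Function.comp] at hi
      simp only [SetLike.mem_coe, RingHom.mem_ker, hφ, map_sub, map_sum, _root_.map_mul, aeval_C, aeval_X,
        sub_eq_zero]
      exact hi
    have : f a = 0 := by
      have := hker ha
      rwa [RingHom.mem_ker, aeval_C] at this
    exact IsLocalization.injective K hS (by simpa using this)
  refine ⟨?_, main⟩
  rintro ⟨P, hP, hne, hle⟩
  have hPC : P = MvPolynomial.C (P.coeff 0) := by
    apply MvPolynomial.ext
    intro t
    rcases eq_or_ne t 0 with rfl | ht
    · simp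
    · rw [MvPolynomial.coeff_C, if_neg (by exact fun h => ht h.symm)]
      by_contra hc
      exact ht (le_antisymm (hle t hc) (hzero t))
  exact hne (main _ (hPC ▸ hP))
end

section
/- Let A be a commutative ring, B ∈ A^{n×n}, c ∈ Aⁿ, and I ⊆ A[x₁,...,xₙ] the ideal generated by P_i = Σ_j b_{ij}x_j − c_i for i = 1,...,n. Then det(B) ∈ lc(I, x_i) for every i = 1,...,n, i.e., for each i there is an element of I with leading term x_i and leading coefficient det(B). -/
open MvPolynomial

/-- Let `A` be a commutative ring, `B` an `n×n` matrix, `c ∈ Aⁿ`, and `I ⊆ A[x₁,…,xₙ]` the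
ideal generated by `P_i = ∑_j b_{ij}x_j − c_i`.  For a term order in which every variable
exceeds `1`, the determinant `det(B)` lies in the ideal of leading coefficients
`lc(I, x_i)` for every `i`. -/
theorem det_mem_lcIdeal_of_linear_system
    {n : ℕ} {A : Type*} [CommRing A] [LinearOrder (Fin n →₀ ℕ)]
    (hadd : ∀ u v w : Fin n →₀ ℕ, u ≤ v → u + w ≤ v + w)
    (hzero : ∀ u : Fin n →₀ ℕ, 0 ≤ u)
    (hvar : ∀ i : Fin n, (0 : Fin n →₀ ℕ) < Finsupp.single i 1)
    (hwf : WellFounded ((· < ·) : (Fin n →₀ ℕ) → (Fin n →₀ ℕ) → Prop))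
    (B : Matrix (Fin n) (Fin n) A) (c : Fin n → A)
    (I : Ideal (MvPolynomial (Fin n) A))
    (hI : I = Ideal.span (Set.range fun i : Fin n =>
      (∑ j : Fin n, MvPolynomial.C (B i j) * MvPolynomial.X j) - MvPolynomial.C (c i))) :
    ∀ i : Fin n, B.det ∈ lcIdeal I (Finsupp.single i 1) := by
  intro i
  by_cases hdet : B.det = 0
  · rw [hdet]; exact (lcIdeal I _).zero_mem
  apply Ideal.subset_span
  set d : A := ∑ j, B.adjugate i j * c j with hd
  refine ⟨C B.det * X i - C d, ?_, ⟨?_, ?_⟩, ?_⟩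
  · have key : ∀ k, ∑ j, B.adjugate i j * B j k = if i = k then B.det else 0 := by
      intro k
      have h := Matrix.adjugate_mul B
      have := congrFun (congrFun h i) k
      rw [Matrix.mul_apply] at this
      simpa [Matrix.one_apply, mul_ite, mul_one, mul_zero] using this
    have hQ2 : C (σ := Fin n) B.det * X i - C d =
        ∑ j, C (B.adjugate i j) * ((∑ k, C (B j k) * X k) - C (c j)) := by
      have : ∀ j, C (B.adjugate i j) * ((∑ k, C (B j k) * X k) - C (c j)) =
          (∑ k : Fin n, C (B.adjugate i j * B j k) * X k) -
            C (B.adjugate i j * c j) := by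
        intro j
        rw [mul_sub, Finset.mul_sum]
        congr 1
        · exact Finset.sum_congr rfl fun k _ => by rw [map_mul]; ring
        · rw [map_mul]
      rw [Finset.sum_congr rfl fun j _ => this j, Finset.sum_sub_distrib,
        Finset.sum_comm]
      congr 1
      · have : ∀ k : Fin n, ∑ j : Fin n, C (B.adjugate i j * B j k) * X k =
            C (if i = k then B.det else 0) * X (σ := Fin n) k := by
          intro k
          rw [← Finset.sum_mul, ← map_sum, key k]
        rw [Finset.sum_congr rfl fun k _ => this k]
        simp [apply_ite (C (σ := Fin n))]
      · rw [← map_sum]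
    rw [hQ2, hI]
    exact Ideal.sum_mem _ fun j _ => Ideal.mul_mem_left _ _
      (Ideal.subset_span ⟨j, rfl⟩)
  · have hne : Finsupp.single i 1 ≠ (0 : Fin n →₀ ℕ) := (hvar i).ne'
    simp [coeff_sub, coeff_C_mul, coeff_X', coeff_C, Ne.symm hne, hdet]
  · intro t' ht'
    have hcoeff : (C (σ := Fin n) B.det * X i - C d).coeff t' =
        B.det * (if Finsupp.single i 1 = t' then 1 else 0) -
          (if 0 = t' then d else 0) := by
      simp [coeff_sub, coeff_C_mul, coeff_X', coeff_C]
    rw [hcoeff] at ht'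
    by_cases h1 : Finsupp.single i 1 = t'
    · exact h1 ▸ le_refl _
    · by_cases h0 : t' = 0
      · exact h0 ▸ (hvar i).le
      · simp only [h1, if_false, mul_zero, zero_sub, ne_eq, neg_eq_zero, ite_eq_right_iff, not_forall] at ht'
        exact absurd ht'.1.symm h0
  · have hne : Finsupp.single i 1 ≠ (0 : Fin n →₀ ℕ) := (hvar i).ne'
    simp [coeff_sub, coeff_C_mul, coeff_X', coeff_C, Ne.symm hne]
end

section
/- Let A be a commutative ring with minimal primes p₁,...,p_m of a radical ideal a, and let I ⊆ (A/a)[x] be an ideal. If t is a monomial such that the image of I in (A/p₁)[x] contains an element with leading term t, then I itself contains an element with leading term t, provided a = p₁ ∩ ... ∩ p_m and there exists c ∈ p₂ ∩ ... ∩ p_m \ p₁ (mod a). -/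
open MvPolynomial

/-- Let `a = p₁ ∩ … ∩ p_m` be a decomposition of a radical ideal `a` into primes, and
`I ⊆ (A/a)[x]` an ideal.  Suppose there exists `c ∈ p₂ ∩ … ∩ p_m` with `c ∉ p₁`.  If the
image of `I` in `(A/p₁)[x]` contains an element with leading term `t`, then `I` itself
contains an element with leading term `t`. -/
theorem leadingTerm_lifts_from_component
    {n : ℕ} {A : Type*} [CommRing A] [LinearOrder (Fin n →₀ ℕ)]
    {m : ℕ} (p : Fin (m + 1) → Ideal A) (hp : ∀ i, (p i).IsPrime)
    (a : Ideal A) (hinf : a = ⨅ i, p i) (hle : ∀ i, a ≤ p i)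
    (c : A) (hc : ∀ i, i ≠ 0 → c ∈ p i) (hc0 : c ∉ p 0)
    (I : Ideal (MvPolynomial (Fin n) (A ⧸ a)))
    (t : Fin n →₀ ℕ)
    (h : ∃ P ∈ I, IsLeadingTermOf
      (MvPolynomial.map (Ideal.Quotient.factor (hle 0)) P) t) :
    ∃ Q ∈ I, IsLeadingTermOf Q t := by
  obtain ⟨P, hPI, hPt, hPmax⟩ := h
  set c' : A ⧸ a := Ideal.Quotient.mk a c with hc'
  -- key: multiplication by c' kills coefficients in ker(factor), preserves others
  have key : ∀ x : A ⧸ a, (c' * x = 0 ↔ Ideal.Quotient.factor (hle 0) x = 0) := by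
    intro x
    obtain ⟨y, rfl⟩ := Ideal.Quotient.mk_surjective x
    have hfac : Ideal.Quotient.factor (hle 0) (Ideal.Quotient.mk a y)
        = Ideal.Quotient.mk (p 0) y := rfl
    rw [hfac, Ideal.Quotient.eq_zero_iff_mem]
    constructor
    · intro h0
      have : c * y ∈ a := by
        rwa [← Ideal.Quotient.eq_zero_iff_mem, map_mul]
      have : c * y ∈ p 0 := hle 0 this
      rcases (hp 0).mem_or_mem this with h | h
      · exact absurd h hc0
      · exact h
    · intro hy
      have hmem : c * y ∈ a := by
        rw [hinf, Ideal.mem_iInf]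
        intro i
        by_cases hi : i = 0
        · subst hi; exact (p 0).mul_mem_left c hy
        · exact (p i).mul_mem_right y (hc i hi)
      rw [hc', ← map_mul, Ideal.Quotient.eq_zero_iff_mem]
      exact hmem
  refine ⟨C c' * P, I.mul_mem_left _ hPI, ?_, ?_⟩
  · rw [coeff_C_mul]
    intro h0
    apply hPt
    rw [coeff_map]
    exact (key _).mp h0
  · intro t' ht'
    rw [coeff_C_mul] at ht'
    refine hPmax t' ?_
    rw [coeff_map]
    intro hz
    exact ht' ((key _).mpr hz)
end

section
/- Let A be a commutative ring, p a prime, and g₁,...,g_m, f ∈ A[x₁,...,xₙ]. Suppose cf = f₁g₁ + ... + f_mg_m + r is a pseudo division of f modulo g₁,...,g_m, where c is a product of leading coefficients of the g_j's with c ∉ p and lc(g_j) ∉ p for all j, and r = 0. Then the leading term of σ_p(f) is divisible by lt(σ_p(g_j)) = lt(g_j) for some j. -/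
/-!
Reduce the identity `c f = ∑ Fⱼ gⱼ` modulo `p`. Since `c ∉ p` and `k(p)` is a field, the leading
coefficient of `σ f` survives on the left, so some `σ Fⱼ * σ gⱼ` has a nonzero coefficient at
`tf := lt(σ f)`: `tf = v + u` with `σ gⱼ` nonzero at `v ≤ tⱼ` and `σ Fⱼ` nonzero at `u`, whence
`tf ≤ tⱼ + u`. Conversely, `Fⱼ` at `u` lies in the ideal generated by the coefficients of `f` at
monomials `≥ tⱼ + u`; as it survives modulo `p`, one of those coefficients does too, so
`tⱼ + u ≤ tf`. Hence `tf = tⱼ + u`, and `lt(σ gⱼ) = tⱼ` because `lc(gⱼ) ∉ p`.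
-/

open MvPolynomial

section LeadingTerm

variable {n : ℕ} [LinearOrder (Fin n →₀ ℕ)] {A B : Type*} [CommRing A] [CommRing B]

theorem IsLeadingTermOf.map {P : MvPolynomial (Fin n) A} {t : Fin n →₀ ℕ}
    (hP : IsLeadingTermOf P t) (φ : A →+* B) (hφ : φ (P.coeff t) ≠ 0) :
    IsLeadingTermOf (MvPolynomial.map φ P) t := by
  refine ⟨by rwa [coeff_map], fun t' ht' => hP.2 t' fun h => ht' ?_⟩
  rw [coeff_map, h, map_zero]

theorem exists_coeff_ne_zero_le_add_of_coeff_mul_ne_zero {σ R : Type*} [CommSemiring R]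
    {P Q : MvPolynomial σ R} {t s : σ →₀ ℕ} (hQ : ∀ v, Q.coeff v ≠ 0 → v ≤ t)
    (h : (P * Q).coeff s ≠ 0) : ∃ u, P.coeff u ≠ 0 ∧ s ≤ t + u := by
  classical
  rw [coeff_mul] at h
  obtain ⟨⟨u, v⟩, huv, h⟩ := Finset.exists_ne_zero_of_sum_ne_zero h
  rw [Finset.HasAntidiagonal.mem_antidiagonal] at huv
  refine ⟨u, left_ne_zero_of_mul h, ?_⟩
  calc s = v + u := by rw [← huv, add_comm]
    _ ≤ t + u := add_le_add (hQ v (right_ne_zero_of_mul h)) le_rfl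

theorem le_leadingTerm_map_of_mem_span_coeff {f : MvPolynomial (Fin n) A} {s tf : Fin n →₀ ℕ}
    {φ : A →+* B} (htf : IsLeadingTermOf (MvPolynomial.map φ f) tf) {a : A}
    (ha : a ∈ Ideal.span {b : A | ∃ u', s ≤ u' ∧ f.coeff u' = b}) (hφa : φ a ≠ 0) :
    s ≤ tf := by
  by_contra hs
  refine hφa (RingHom.mem_ker.mp (Ideal.span_le.mpr ?_ ha))
  rintro _ ⟨u', hu', rfl⟩
  by_contra hu'φ
  exact hs (hu'.trans (htf.2 u' (by rwa [coeff_map])))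

end LeadingTerm

theorem algebraMap_fractionRing_quotient_mk_eq_zero_iff {A : Type*} [CommRing A] (p : Ideal A)
    (a : A) :
    algebraMap (A ⧸ p) (FractionRing (A ⧸ p)) (Ideal.Quotient.mk p a) = 0 ↔ a ∈ p := by
  rw [map_eq_zero_iff _ (IsFractionRing.injective _ _), Ideal.Quotient.eq_zero_iff_mem]

theorem leadingTerm_specialization_dvd_of_pseudoDivision_general
    {n : ℕ} {A : Type*} [CommRing A] [LinearOrder (Fin n →₀ ℕ)]
    (p : Ideal A) [p.IsPrime]
    {m : ℕ} (g : Fin m → MvPolynomial (Fin n) A) (t : Fin m → (Fin n →₀ ℕ))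
    (htg : ∀ j, IsLeadingTermOf (g j) (t j))
    (hlc : ∀ j, (g j).coeff (t j) ∉ p)
    (f : MvPolynomial (Fin n) A) (F : Fin m → MvPolynomial (Fin n) A) (c : A)
    (hcp : c ∉ p)
    (hdiv : MvPolynomial.C c * f = ∑ j : Fin m, F j * g j)
    (hcoef : ∀ j u, (F j).coeff u ∈
      Ideal.span {b : A | ∃ u', t j + u ≤ u' ∧ f.coeff u' = b}) :
    let σ : MvPolynomial (Fin n) A →+* MvPolynomial (Fin n) (FractionRing (A ⧸ p)) :=
      MvPolynomial.map ((algebraMap (A ⧸ p) (FractionRing (A ⧸ p))).comp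
        (Ideal.Quotient.mk p))
    ∀ tf, IsLeadingTermOf (σ f) tf →
      ∃ j : Fin m, IsLeadingTermOf (σ (g j)) (t j) ∧ ∃ u, tf = t j + u := by
  intro σ tf htf
  set κ : A →+* FractionRing (A ⧸ p) :=
    (algebraMap (A ⧸ p) (FractionRing (A ⧸ p))).comp (Ideal.Quotient.mk p)
  have hκ (a : A) : κ a ≠ 0 ↔ a ∉ p :=
    (algebraMap_fractionRing_quotient_mk_eq_zero_iff p a).not
  have hσg (j : Fin m) : IsLeadingTermOf (σ (g j)) (t j) := (htg j).map κ ((hκ _).mpr (hlc j))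
  have hne : (σ (C c * f)).coeff tf ≠ 0 := by
    rw [coeff_map, coeff_C_mul, map_mul, ← coeff_map]
    exact mul_ne_zero ((hκ c).mpr hcp) htf.1
  rw [hdiv, map_sum, coeff_sum] at hne
  obtain ⟨j, -, hj⟩ := Finset.exists_ne_zero_of_sum_ne_zero hne
  rw [map_mul] at hj
  obtain ⟨u, hu, htf_le⟩ :=
    exists_coeff_ne_zero_le_add_of_coeff_mul_ne_zero (hσg j).2 hj
  rw [coeff_map] at hu
  have hle_tf : t j + u ≤ tf := le_leadingTerm_map_of_mem_span_coeff htf (hcoef j u) hu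
  exact ⟨j, hσg j, u, le_antisymm htf_le hle_tf⟩

/-- Specialization of pseudo division: let `p` be a prime of `A` and suppose
`c·f = f₁g₁ + … + f_mg_m` is a pseudo division of `f` modulo `g₁,…,g_m` with remainder `0`,
where `c` is a product of leading coefficients of the `g_j`'s with `c ∉ p` and
`lc(g_j) ∉ p` for all `j`.  Then the leading term of `σ_p(f)` is divisible by
`lt(σ_p(g_j)) = lt(g_j)` for some `j`, where `σ_p : A[x] → k(p)[x]` is coefficientwise
reduction to the residue field `k(p) = Frac(A/p)`. -/
theorem leadingTerm_specialization_dvd_of_pseudoDivision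
    {n : ℕ} {A : Type*} [CommRing A] [LinearOrder (Fin n →₀ ℕ)]
    (hadd : ∀ u v w : Fin n →₀ ℕ, u ≤ v → u + w ≤ v + w)
    (hzero : ∀ u : Fin n →₀ ℕ, 0 ≤ u)
    (hwf : WellFounded ((· < ·) : (Fin n →₀ ℕ) → (Fin n →₀ ℕ) → Prop))
    (p : Ideal A) [p.IsPrime]
    {m : ℕ} (g : Fin m → MvPolynomial (Fin n) A) (t : Fin m → (Fin n →₀ ℕ))
    (htg : ∀ j, IsLeadingTermOf (g j) (t j))
    (hlc : ∀ j, (g j).coeff (t j) ∉ p)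
    (f : MvPolynomial (Fin n) A) (F : Fin m → MvPolynomial (Fin n) A) (c : A)
    (hcprod : ∃ l : Multiset (Fin m), c = (l.map fun j => (g j).coeff (t j)).prod)
    (hcp : c ∉ p)
    (hdiv : MvPolynomial.C c * f = ∑ j : Fin m, F j * g j)
    (hFlt : ∀ j u, IsLeadingTermOf (F j) u → ∀ tf, IsLeadingTermOf f tf → u + t j ≤ tf)
    (hcoef : ∀ j u, (F j).coeff u ∈
      Ideal.span {b : A | ∃ u', t j + u ≤ u' ∧ f.coeff u' = b}) :
    let σ : MvPolynomial (Fin n) A →+* MvPolynomial (Fin n) (FractionRing (A ⧸ p)) :=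
      MvPolynomial.map ((algebraMap (A ⧸ p) (FractionRing (A ⧸ p))).comp
        (Ideal.Quotient.mk p))
    ∀ tf, IsLeadingTermOf (σ f) tf →
      ∃ j : Fin m, IsLeadingTermOf (σ (g j)) (t j) ∧ ∃ u, tf = t j + u :=
  leadingTerm_specialization_dvd_of_pseudoDivision_general p g t htg hlc f F c hcp hdiv hcoef
end
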